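/- Let d ≥ 1, σ > 0, let ‖·‖_α be an arbitrary norm on ℝ^d, and let u : ℝ^d → ℝ be bounded and measurable with 𝔲 = sup_{x ∈ ℝ^d} |u(x)|. Then the Gaussian smoothing f of u is Lipschitz with respect to ‖·‖_α: for all x, y ∈ ℝ^d, |f(x) − f(y)| ≤ (𝔲/σ)√(2/π) · (sup_{‖w‖_α ≤ 1} ‖w‖₂) · ‖x − y‖_α. -/

import Mathlib

/-!
With `v = x - y`, translation invariance of Lebesgue measure gives
`f x - f y = ∫ u (x + z) (ρ z - ρ (z + v)) dz`, so `|f x - f y| ≤ 𝔲 ∫ |ρ z - ρ (z + v)| dz`.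
Since `ρ` is radial, a reflection replaces `v` by `‖v‖ eᵢ`, and since `ρ` is a product of
one-dimensional Gaussians `g`, the integral collapses to `∫ |g t - g (t + ‖v‖)| dt`. As `g` is even
and unimodal, this equals `2 ∫_{-‖v‖/2}^{‖v‖/2} g ≤ 2 ‖v‖ g 0 = ‖v‖ √(2/π) / σ`. Finally
`‖v‖₂ ≤ (sup_{N w ≤ 1} ‖w‖₂) N v`, the supremum being finite because a norm on a
finite-dimensional space is bounded below by a multiple of the Euclidean norm (minimise it over
the compact unit sphere).
-/

open MeasureTheory Real

noncomputable def gaussDensity (d : ℕ) (σ : ℝ) (z : EuclideanSpace ℝ (Fin d)) : ℝ :=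
  (2 * Real.pi * σ ^ 2) ^ (-(d : ℝ) / 2) * Real.exp (-‖z‖ ^ 2 / (2 * σ ^ 2))

noncomputable def gaussSmooth (d : ℕ) (σ : ℝ) (u : EuclideanSpace ℝ (Fin d) → ℝ)
    (x : EuclideanSpace ℝ (Fin d)) : ℝ :=
  ∫ z, u (x + z) * gaussDensity d σ z

open Set Function ProbabilityTheory

section FiniteDimensionalSeminorm

variable {E : Type*} [NormedAddCommGroup E] [NormedSpace ℝ E] [FiniteDimensional ℝ E]

theorem Seminorm.continuous_of_finiteDimensional (p : Seminorm ℝ E) : Continuous p := by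
  simpa [continuousOn_univ] using p.convexOn.continuousOn_interior

theorem Seminorm.exists_pos_mul_norm_le (p : Seminorm ℝ E) (hp : ∀ x, p x = 0 → x = 0) :
    ∃ c > 0, ∀ x, c * ‖x‖ ≤ p x := by
  cases subsingleton_or_nontrivial E with
  | inl _ => exact ⟨1, one_pos, fun x => by simp [Subsingleton.elim x 0]⟩
  | inr _ =>
    obtain ⟨x₀, hx₀, hmin⟩ := (isCompact_sphere (0 : E) 1).exists_isMinOn
      (NormedSpace.sphere_nonempty.2 zero_le_one) p.continuous_of_finiteDimensional.continuousOn
    have hx₀_ne : x₀ ≠ 0 := ne_zero_of_mem_unit_sphere ⟨x₀, hx₀⟩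
    refine ⟨p x₀, (apply_nonneg p x₀).lt_of_ne' (mt (hp x₀) hx₀_ne), fun x => ?_⟩
    rcases eq_or_ne x 0 with rfl | hx
    · simp
    have hnx : 0 < ‖x‖ := norm_pos_iff.2 hx
    have hmem : ‖x‖⁻¹ • x ∈ Metric.sphere (0 : E) 1 := by
      simp [norm_smul, hnx.ne']
    have := hmin hmem
    rw [Set.mem_ofPred_eq, map_smul_eq_mul, norm_inv, norm_norm] at this
    rwa [le_inv_mul_iff₀ hnx, mul_comm] at this

theorem Seminorm.norm_le_iSup_norm_mul (p : Seminorm ℝ E) (hp : ∀ x, p x = 0 → x = 0) (v : E) :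
    ‖v‖ ≤ (⨆ w : {w : E // p w ≤ 1}, ‖(w : E)‖) * p v := by
  obtain ⟨c, hc, hcp⟩ := p.exists_pos_mul_norm_le hp
  have hbdd : BddAbove (Set.range fun w : {w : E // p w ≤ 1} => ‖(w : E)‖) := by
    refine ⟨c⁻¹, ?_⟩
    rintro _ ⟨⟨w, hw⟩, rfl⟩
    rw [← one_div, le_div_iff₀' hc]
    exact (hcp w).trans hw
  rcases eq_or_ne v 0 with rfl | hv
  · simp
  have hpv : 0 < p v := (apply_nonneg p v).lt_of_ne' (mt (hp v) hv)
  have hmem : p ((p v)⁻¹ • v) ≤ 1 := by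
    rw [map_smul_eq_mul, norm_inv, Real.norm_of_nonneg hpv.le, inv_mul_cancel₀ hpv.ne']
  have := le_ciSup hbdd ⟨_, hmem⟩
  rw [norm_smul, norm_inv, Real.norm_of_nonneg hpv.le, inv_mul_le_iff₀ hpv, mul_comm] at this
  exact this

end FiniteDimensionalSeminorm

theorem setIntegral_preimage_add_const (g : ℝ → ℝ) (s : Set ℝ) (a : ℝ) :
    ∫ t in (· + a) ⁻¹' s, g (t + a) = ∫ t in s, g t :=
  (measurePreserving_add_right volume a).setIntegral_preimage_emb
    (measurableEmbedding_addRight a) g s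

section TranslationDifference

variable {g : ℝ → ℝ}

theorem integral_Iic_comp_add_sub (hg : Integrable g) (c a : ℝ) :
    ∫ t in Iic c, (g (t + a) - g t) = ∫ t in c..c + a, g t := by
  have hshift := setIntegral_preimage_add_const g (Iic (c + a)) a
  rw [preimage_add_const_Iic, add_sub_cancel_right] at hshift
  rw [integral_sub (hg.comp_add_right a).integrableOn hg.integrableOn, hshift,
    intervalIntegral.integral_Iic_sub_Iic hg.integrableOn hg.integrableOn]

theorem integral_Ioi_sub_comp_add (hg : Integrable g) (c a : ℝ) :
    ∫ t in Ioi c, (g t - g (t + a)) = ∫ t in c..c + a, g t := by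
  have hshift := setIntegral_preimage_add_const g (Ioi (c + a)) a
  rw [preimage_add_const_Ioi, add_sub_cancel_right] at hshift
  rw [integral_sub hg.integrableOn (hg.comp_add_right a).integrableOn, hshift,
    intervalIntegral.integral_Ioi_sub_Ioi' hg.integrableOn hg.integrableOn]

/-- `hmono` says that `g` is even and unimodal, so `g t - g (t + a)` changes sign only at
`t = -a/2`, and on either side the integral is `∫_{-a/2}^{a/2} g`. -/
theorem integral_abs_sub_comp_add_le (hg : Integrable g)
    (hmono : ∀ s t, |s| ≤ |t| → g t ≤ g s) {a : ℝ} (ha : 0 ≤ a) :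
    ∫ t, |g t - g (t + a)| ≤ 2 * a * g 0 := by
  have hint : Integrable fun t => |g t - g (t + a)| := (hg.sub (hg.comp_add_right a)).abs
  have hleft : ∫ t in Iic (-(a / 2)), |g t - g (t + a)| = ∫ t in -(a / 2)..a / 2, g t := by
    rw [setIntegral_congr_fun measurableSet_Iic (g := fun t => g (t + a) - g t),
      integral_Iic_comp_add_sub hg, neg_add_eq_sub, sub_half]
    intro t ht
    have : g t ≤ g (t + a) := hmono _ _ (sq_le_sq.1 (by rw [mem_Iic] at ht; nlinarith))
    simp [abs_of_nonpos (sub_nonpos.2 this)]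
  have hright : ∫ t in Ioi (-(a / 2)), |g t - g (t + a)| = ∫ t in -(a / 2)..a / 2, g t := by
    rw [setIntegral_congr_fun measurableSet_Ioi (g := fun t => g t - g (t + a)),
      integral_Ioi_sub_comp_add hg, neg_add_eq_sub, sub_half]
    intro t ht
    have : g (t + a) ≤ g t := hmono _ _ (sq_le_sq.1 (by rw [mem_Ioi] at ht; nlinarith))
    simp [abs_of_nonneg (sub_nonneg.2 this)]
  have hcentre : ∫ t in -(a / 2)..a / 2, g t ≤ ∫ _ in -(a / 2)..a / 2, g 0 :=
    intervalIntegral.integral_mono_on (by linarith) hg.intervalIntegrable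
      intervalIntegrable_const fun t _ => hmono 0 t (by simp [abs_nonneg])
  rw [intervalIntegral.integral_const, smul_eq_mul, sub_neg_eq_add, add_halves] at hcentre
  rw [← intervalIntegral.integral_Iic_add_Ioi hint.integrableOn hint.integrableOn, hleft, hright]
  linarith

end TranslationDifference

theorem integral_abs_prod_sub_prod_update {ι : Type*} [Fintype ι] [DecidableEq ι] {g : ℝ → ℝ}
    (hg₀ : ∀ t, 0 ≤ g t) (hg₁ : ∫ t, g t = 1) (i : ι) (a : ℝ) :
    ∫ x : ι → ℝ, |∏ j, g (x j) - ∏ j, g (update x i (x i + a) j)| = ∫ t, |g t - g (t + a)| := by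
  set F : ι → ℝ → ℝ := update (fun _ => g) i fun t => |g t - g (t + a)| with hF
  have hpoint (x : ι → ℝ) :
      |∏ j, g (x j) - ∏ j, g (update x i (x i + a) j)| = ∏ j, F j (x j) := by
    have hrest : ∏ j ∈ {i}ᶜ, g (update x i (x i + a) j) = ∏ j ∈ {i}ᶜ, g (x j) :=
      Finset.prod_congr rfl fun j hj => by
        rw [update_of_ne (by simpa using hj)]
    have hrest' : ∏ j ∈ {i}ᶜ, F j (x j) = ∏ j ∈ {i}ᶜ, g (x j) :=
      Finset.prod_congr rfl fun j hj => by
        rw [hF, update_of_ne (by simpa using hj)]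
    rw [Fintype.prod_eq_mul_prod_compl i, Fintype.prod_eq_mul_prod_compl i (fun j => g _),
      Fintype.prod_eq_mul_prod_compl i (fun j => F j _), hrest, hrest', update_self, hF,
      update_self, ← sub_mul, abs_mul, abs_of_nonneg (Finset.prod_nonneg fun j _ => hg₀ _)]
  simp_rw [hpoint]
  rw [integral_fintype_prod_volume_eq_prod, Fintype.prod_eq_mul_prod_compl i,
    Finset.prod_eq_one fun j hj => by rw [hF, update_of_ne (by simpa using hj), hg₁],
    mul_one, hF, update_self]

theorem abs_integral_comp_add_mul_sub_le {E : Type*} [AddCommGroup E] [MeasurableSpace E]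
    [MeasurableAdd E] {μ : Measure E} [μ.IsAddRightInvariant] {u ρ : E → ℝ} (hu : Measurable u)
    {B : ℝ} (hB : ∀ x, |u x| ≤ B) (hρ : Integrable ρ μ) (x y : E) :
    |∫ z, u (x + z) * ρ z ∂μ - ∫ z, u (y + z) * ρ z ∂μ|
      ≤ B * ∫ z, |ρ z - ρ (z + (x - y))| ∂μ := by
  have hux : AEStronglyMeasurable (fun z => u (x + z)) μ :=
    (hu.comp (measurable_const_add x)).aestronglyMeasurable
  have hbound : ∀ᵐ z ∂μ, ‖u (x + z)‖ ≤ B := ae_of_all _ fun z => hB _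
  have hshift : ∫ z, u (y + z) * ρ z ∂μ = ∫ z, u (x + z) * ρ (z + (x - y)) ∂μ := by
    rw [← integral_add_right_eq_self _ (x - y)]
    congr with z
    rw [show y + (z + (x - y)) = x + z by abel]
  rw [hshift, ← integral_sub (hρ.bdd_mul hux hbound)
    ((hρ.comp_add_right (x - y)).bdd_mul hux hbound), ← integral_const_mul]
  refine norm_integral_le_of_norm_le (G := ℝ) (g := fun z => B * |ρ z - ρ (z + (x - y))|)
    ((hρ.sub (hρ.comp_add_right (x - y))).abs.const_mul B) (ae_of_all _ fun z => ?_)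
  rw [← mul_sub, Real.norm_eq_abs, abs_mul]
  exact mul_le_mul_of_nonneg_right (hB _) (abs_nonneg _)

theorem integral_abs_sub_comp_add_eq_of_norm_eq {E : Type*} [NormedAddCommGroup E]
    [InnerProductSpace ℝ E] [FiniteDimensional ℝ E] [MeasurableSpace E] [BorelSpace E]
    (φ : ℝ → ℝ) {v w : E} (h : ‖v‖ = ‖w‖) :
    ∫ z, |φ ‖z‖ - φ ‖z + v‖| = ∫ z, |φ ‖z‖ - φ ‖z + w‖| := by
  set T := (ℝ ∙ (w - v))ᗮ.reflection
  have hTw : T w = v := Submodule.reflection_sub h.symm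
  rw [← T.measurePreserving.integral_comp T.toHomeomorph.measurableEmbedding]
  simp_rw [← hTw, ← map_add, LinearIsometryEquiv.norm_map]

theorem gaussianPDFReal_zero_le_of_abs_le (v : NNReal) {s t : ℝ} (h : |s| ≤ |t|) :
    gaussianPDFReal 0 v t ≤ gaussianPDFReal 0 v s := by
  simp only [gaussianPDFReal, sub_zero]
  gcongr _ * rexp (-?_ / _)
  exact sq_le_sq.2 h

theorem gaussDensity_eq_prod (d : ℕ) (σ : ℝ) (z : EuclideanSpace ℝ (Fin d)) :
    gaussDensity d σ z = ∏ i, gaussianPDFReal 0 (σ ^ 2).toNNReal (z i) := by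
  have hc : 0 ≤ 2 * π * σ ^ 2 := by positivity
  simp only [gaussianPDFReal, Real.coe_toNNReal _ (sq_nonneg σ), sub_zero,
    Finset.prod_mul_distrib, Finset.prod_const, Finset.card_univ, Fintype.card_fin,
    ← Real.exp_sum, ← Finset.sum_div]
  rw [gaussDensity, EuclideanSpace.norm_sq_eq, sqrt_eq_rpow, ← rpow_neg hc, ← rpow_mul_natCast hc]
  simp [div_eq_inv_mul]

theorem integrable_gaussDensity (d : ℕ) (σ : ℝ) : Integrable (gaussDensity d σ) := by
  rw [← (EuclideanSpace.volume_preserving_symm_measurableEquiv_toLp (Fin d)).symm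
    |>.integrable_comp_emb (MeasurableEquiv.measurableEmbedding _)]
  simp only [comp_def, gaussDensity_eq_prod]
  exact Integrable.fintype_prod fun _ => integrable_gaussianPDFReal 0 (σ ^ 2).toNNReal

theorem two_mul_gaussianPDFReal_zero {σ : ℝ} (hσ : 0 < σ) :
    2 * gaussianPDFReal 0 (σ ^ 2).toNNReal 0 = 1 / σ * √(2 / π) := by
  simp only [gaussianPDFReal, Real.coe_toNNReal _ (sq_nonneg σ), sub_zero]
  rw [sqrt_mul (by positivity), sqrt_mul (by norm_num), sqrt_sq hσ.le, sqrt_div (by norm_num)]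
  field_simp
  simp

theorem integral_abs_gaussDensity_sub_comp_add_le {d : ℕ} {σ : ℝ} (hσ : 0 < σ)
    (v : EuclideanSpace ℝ (Fin d)) :
    ∫ z, |gaussDensity d σ z - gaussDensity d σ (z + v)| ≤ ‖v‖ / σ * √(2 / π) := by
  set g := gaussianPDFReal 0 (σ ^ 2).toNNReal
  rcases eq_or_ne v 0 with rfl | hv
  · simp
  obtain ⟨i, -⟩ : ∃ i, v i ≠ 0 := by
    by_contra! h
    exact hv (by ext i; exact h i)
  have hw : ‖v‖ = ‖EuclideanSpace.single i ‖v‖‖ := by simp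
  have hvar : (σ ^ 2).toNNReal ≠ 0 := by simpa using hσ.ne'
  have htoLp (x : Fin d → ℝ) (a : ℝ) :
      WithLp.toLp 2 x + EuclideanSpace.single i a = WithLp.toLp 2 (update x i (x i + a)) := by
    ext j; by_cases h : j = i <;> simp [h]
  calc ∫ z, |gaussDensity d σ z - gaussDensity d σ (z + v)|
      = ∫ z, |gaussDensity d σ z - gaussDensity d σ (z + EuclideanSpace.single i ‖v‖)| :=
        integral_abs_sub_comp_add_eq_of_norm_eq
          (fun r => (2 * π * σ ^ 2) ^ (-(d : ℝ) / 2) * exp (-r ^ 2 / (2 * σ ^ 2))) hw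
    _ = ∫ x : Fin d → ℝ, |∏ j, g (x j) - ∏ j, g (update x i (x i + ‖v‖) j)| := by
        rw [← (EuclideanSpace.volume_preserving_symm_measurableEquiv_toLp (Fin d)).symm
          |>.integral_comp']
        simp [htoLp, gaussDensity_eq_prod, g]
    _ = ∫ t, |g t - g (t + ‖v‖)| :=
        integral_abs_prod_sub_prod_update (gaussianPDFReal_nonneg _ _)
          (integral_gaussianPDFReal_eq_one 0 hvar) i ‖v‖
    _ ≤ 2 * ‖v‖ * g 0 :=
        integral_abs_sub_comp_add_le (integrable_gaussianPDFReal 0 _)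
          (fun _ _ => gaussianPDFReal_zero_le_of_abs_le _) (norm_nonneg v)
    _ = ‖v‖ / σ * √(2 / π) := by
        rw [mul_right_comm, two_mul_gaussianPDFReal_zero hσ]
        ring

theorem gaussSmooth_lipschitz_arbitrary_norm_general
    (d : ℕ) (σ : ℝ) (hσ : 0 < σ)
    (N : EuclideanSpace ℝ (Fin d) → ℝ)
    (hN_zero : ∀ w, N w = 0 ↔ w = 0)
    (hN_smul : ∀ (a : ℝ) (w : EuclideanSpace ℝ (Fin d)), N (a • w) = |a| * N w)
    (hN_add : ∀ v w : EuclideanSpace ℝ (Fin d), N (v + w) ≤ N v + N w)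
    (u : EuclideanSpace ℝ (Fin d) → ℝ)
    (hu_meas : Measurable u) (hu_bdd : ∃ M : ℝ, ∀ x, |u x| ≤ M) :
    ∀ x y : EuclideanSpace ℝ (Fin d),
      |gaussSmooth d σ u x - gaussSmooth d σ u y|
        ≤ (⨆ w : EuclideanSpace ℝ (Fin d), |u w|) / σ * Real.sqrt (2 / Real.pi)
            * (⨆ w : {w : EuclideanSpace ℝ (Fin d) // N w ≤ 1}, ‖(w : EuclideanSpace ℝ (Fin d))‖)
            * N (x - y) := by
  intro x y
  obtain ⟨M, hM⟩ := hu_bdd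
  set U := ⨆ w : EuclideanSpace ℝ (Fin d), |u w|
  set S := ⨆ w : {w // N w ≤ 1}, ‖(w : EuclideanSpace ℝ (Fin d))‖
  have hU : ∀ w, |u w| ≤ U := le_ciSup ⟨M, by rintro _ ⟨w, rfl⟩; exact hM w⟩
  have hU₀ : 0 ≤ U := (abs_nonneg _).trans (hU 0)
  let p : Seminorm ℝ (EuclideanSpace ℝ (Fin d)) := Seminorm.of N hN_add hN_smul
  have hnorm : ‖x - y‖ ≤ S * N (x - y) :=
    p.norm_le_iSup_norm_mul (fun w => (hN_zero w).1) (x - y)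
  calc |gaussSmooth d σ u x - gaussSmooth d σ u y|
      ≤ U * ∫ z, |gaussDensity d σ z - gaussDensity d σ (z + (x - y))| :=
        abs_integral_comp_add_mul_sub_le hu_meas hU (integrable_gaussDensity d σ) x y
    _ ≤ U * (‖x - y‖ / σ * √(2 / π)) := by
        gcongr
        exact integral_abs_gaussDensity_sub_comp_add_le hσ (x - y)
    _ ≤ U * (S * N (x - y) / σ * √(2 / π)) := by gcongr
    _ = U / σ * √(2 / π) * S * N (x - y) := by ring

/-- Lipschitz property of the Gaussian smoothing with respect to an
arbitrary norm `N` on `ℝ^d`: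
`|f(x) − f(y)| ≤ (𝔲/σ)√(2/π) (sup_{N(w) ≤ 1} ‖w‖₂) N(x − y)`. -/
theorem gaussSmooth_lipschitz_arbitrary_norm
    (d : ℕ) (hd : 1 ≤ d) (σ : ℝ) (hσ : 0 < σ)
    (N : EuclideanSpace ℝ (Fin d) → ℝ)
    (hN_zero : ∀ w, N w = 0 ↔ w = 0)
    (hN_smul : ∀ (a : ℝ) (w : EuclideanSpace ℝ (Fin d)), N (a • w) = |a| * N w)
    (hN_add : ∀ v w : EuclideanSpace ℝ (Fin d), N (v + w) ≤ N v + N w)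
    (u : EuclideanSpace ℝ (Fin d) → ℝ)
    (hu_meas : Measurable u) (hu_bdd : ∃ M : ℝ, ∀ x, |u x| ≤ M) :
    ∀ x y : EuclideanSpace ℝ (Fin d),
      |gaussSmooth d σ u x - gaussSmooth d σ u y|
        ≤ (⨆ w : EuclideanSpace ℝ (Fin d), |u w|) / σ * Real.sqrt (2 / Real.pi)
            * (⨆ w : {w : EuclideanSpace ℝ (Fin d) // N w ≤ 1}, ‖(w : EuclideanSpace ℝ (Fin d))‖)
            * N (x - y) :=
  gaussSmooth_lipschitz_arbitrary_norm_general d σ hσ N hN_zero hN_smul hN_add u hu_meas hu_bdd
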